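/- Let N ≥ 1, let L be a real symmetric N×N positive semidefinite matrix with L·𝟏 = 0 and kernel exactly the span of 𝟏, let k be an index, h > 0, Δ = h·e_k e_kᵀ. Let P_T > 0, P_L > 0, let θ satisfy 0 < θ < 1 − P_L/P_T, and let δ be a real number with |δ| < θ·P_T/(1 + √N). Define S(t) = (P_T + δ)·𝟏 + exp(−t(L + Δ))·(−δ·𝟏). Then for every index i with maximum capacity P_{i,max} > 0, and every t ≥ 0, the commanded power P_i(t) = (P_L / S_i(t))·P_{i,max} satisfies P_i(t) < P_{i,max}. -/

import Mathlib

/-!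
Since `L + Δ` is positive semidefinite, `exp (-t (L + Δ))` has Euclidean operator norm at most
one, so every entry of `exp (-t (L + Δ)) (-δ 𝟏)` is bounded by `‖δ 𝟏‖₂ = √N |δ|`. Hence
`S_i(t) ≥ P_T - (1 + √N) |δ| > (1 - θ) P_T > P_L > 0`, i.e. `P_L / S_i(t) < 1`.
-/

open Matrix

open scoped Matrix.Norms.L2Operator

lemma Matrix.posSemidef_single {n : Type*} [DecidableEq n] {h : ℝ} (i : n) (hh : 0 ≤ h) :
    (single i i h).PosSemidef := by
  rw [← diagonal_single]
  exact .diagonal (Pi.single_nonneg.2 hh)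

lemma Matrix.PosSemidef.norm_exp_neg_le_one {n : Type*} [Fintype n] [DecidableEq n]
    {M : Matrix n n ℝ} (hM : M.PosSemidef) : ‖NormedSpace.exp (-M)‖ ≤ 1 := by
  rw [← CFC.real_exp_eq_normedSpace_exp hM.isHermitian.isSelfAdjoint.neg]
  refine norm_cfc_le zero_le_one fun x hx => ?_
  rw [← spectrum.neg_eq, Set.mem_neg] at hx
  have hx_nonpos : 0 ≤ -x := (posSemidef_iff_isHermitian_and_spectrum_nonneg.1 hM).2 hx
  rw [Real.norm_of_nonneg (Real.exp_nonneg x)]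
  exact Real.exp_le_one_iff.2 (by linarith)

lemma Matrix.abs_mulVec_apply_le {m n : Type*} [Fintype m] [Fintype n] [DecidableEq n]
    (A : Matrix m n ℝ) (v : n → ℝ) (i : m) :
    |(A *ᵥ v) i| ≤ ‖A‖ * ‖WithLp.toLp 2 v‖ :=
  (PiLp.norm_apply_le (WithLp.toLp 2 (A *ᵥ v)) i).trans (A.l2_opNorm_mulVec (WithLp.toLp 2 v))

lemma EuclideanSpace.norm_toLp_const {n : Type*} [Fintype n] (c : ℝ) :
    ‖WithLp.toLp 2 (fun _ : n => c)‖ = √(Fintype.card n) * |c| := by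
  simp [EuclideanSpace.norm_eq, Real.sqrt_mul, Real.sqrt_sq_eq_abs]

lemma Matrix.PosSemidef.abs_exp_neg_smul_mulVec_const_apply_le {n : Type*} [Fintype n]
    [DecidableEq n] {M : Matrix n n ℝ} (hM : M.PosSemidef) {t : ℝ} (ht : 0 ≤ t) (c : ℝ) (i : n) :
    |(NormedSpace.exp (-(t • M)) *ᵥ fun _ => c) i| ≤ √(Fintype.card n) * |c| :=
  calc |(NormedSpace.exp (-(t • M)) *ᵥ fun _ => c) i|
      ≤ ‖NormedSpace.exp (-(t • M))‖ * ‖WithLp.toLp 2 (fun _ : n => c)‖ := abs_mulVec_apply_le ..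
    _ ≤ 1 * (√(Fintype.card n) * |c|) := by
      rw [EuclideanSpace.norm_toLp_const]
      gcongr
      exact (hM.smul ht).norm_exp_neg_le_one
    _ = √(Fintype.card n) * |c| := one_mul _

theorem commanded_power_below_capacity_general
    (N : ℕ) (L : Matrix (Fin N) (Fin N) ℝ)
    (hpsd : L.PosSemidef)
    (k : Fin N) (h : ℝ) (hh : 0 < h)
    (PT PL θ δ : ℝ) (hPT : 0 < PT) (hPL : 0 < PL)
    (hθ' : θ < 1 - PL / PT)
    (hδ : |δ| < θ * PT / (1 + Real.sqrt N))
    (S : ℝ → Fin N → ℝ)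
    (hS : S = fun t =>
      (fun _ => PT + δ) +
        NormedSpace.exp (-(t • (L + Matrix.single k k h))) *ᵥ (fun _ => -δ))
    (Pmax : Fin N → ℝ) :
    ∀ i : Fin N, 0 < Pmax i → ∀ t : ℝ, 0 ≤ t →
      (PL / S t i) * Pmax i < Pmax i := by
  intro i hPmax t ht
  have hdev := (hpsd.add (posSemidef_single k hh.le)).abs_exp_neg_smul_mulVec_const_apply_le
    ht (-δ) i
  rw [Fintype.card_fin, abs_neg] at hdev
  have hδ' : (1 + √N) * |δ| < θ * PT := by
    rwa [lt_div_iff₀ (by positivity), mul_comm] at hδ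
  have hθPT : θ * PT < PT - PL := by
    rwa [lt_sub_comm, div_lt_iff₀ hPT, sub_mul, one_mul, lt_sub_comm] at hθ'
  have hS_gt : PL < S t i := by
    subst hS
    simp only [Pi.add_apply]
    linarith [neg_abs_le δ, (abs_le.1 hdev).1]
  exact mul_lt_of_lt_one_left hPmax ((div_lt_one (hPL.trans hS_gt)).2 hS_gt)

/-- Under the perturbation bound `|δ| < θ·P_T/(1+√N)` with
`0 < θ < 1 − P_L/P_T`, the proportional power command
`P_i(t) = (P_L / S_i(t))·P_{i,max}` stays strictly below `P_{i,max}`. -/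
theorem commanded_power_below_capacity
    (N : ℕ) (hN : 1 ≤ N) (L : Matrix (Fin N) (Fin N) ℝ)
    (hsymm : L.IsSymm) (hpsd : L.PosSemidef)
    (hL1 : L *ᵥ (fun _ => (1 : ℝ)) = 0)
    (hker : ∀ u : Fin N → ℝ, L *ᵥ u = 0 → ∃ c : ℝ, u = fun _ => c)
    (k : Fin N) (h : ℝ) (hh : 0 < h)
    (PT PL θ δ : ℝ) (hPT : 0 < PT) (hPL : 0 < PL)
    (hθ : 0 < θ) (hθ' : θ < 1 - PL / PT)
    (hδ : |δ| < θ * PT / (1 + Real.sqrt N))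
    (S : ℝ → Fin N → ℝ)
    (hS : S = fun t =>
      (fun _ => PT + δ) +
        NormedSpace.exp (-(t • (L + Matrix.single k k h))) *ᵥ (fun _ => -δ))
    (Pmax : Fin N → ℝ) :
    ∀ i : Fin N, 0 < Pmax i → ∀ t : ℝ, 0 ≤ t →
      (PL / S t i) * Pmax i < Pmax i :=
  commanded_power_below_capacity_general N L hpsd k h hh PT PL θ δ hPT hPL hθ' hδ S hS Pmax
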